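/- arXiv:1809.10168 — 7 statements merged into one kernel-verified Lean document; each statement's English description precedes it below -/
import Mathlib

section
/- Let n and m be positive integers and s, t > 0. Let X and Y be independent real random variables, where X has the Gamma(n, s) distribution and Y has the Gamma(m, t) distribution. Then Pr[X ≤ Y] = I_p(n, m), where p = s/(s+t) and I_p(n, m) is the regularized incomplete beta function. -/
open MeasureTheory ProbabilityTheory

/-- The regularized incomplete beta function `I_p(n, m)` for positive integer
parameters `n, m`. -/
noncomputable def regIncBeta (n m : ℕ) (p : ℝ) : ℝ :=
  (Real.Gamma (n + m) / (Real.Gamma n * Real.Gamma m)) *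
    ∫ u in (0:ℝ)..p, u ^ (n - 1) * (1 - u) ^ (m - 1)

/-!
By independence, `P(X ≤ Y) = ∫ g(y) F(y) dy`, where `g` is the `Gamma(m, t)` density and `F`
the `Gamma(n, s)` CDF. Substituting `x = y u` in `F(y) = ∫_0^y f`, the integrand becomes a
constant times `u^(n-1) y^(n+m-1) e^(-(su+t)y)` on `(0, ∞) × [0, 1]`. Integrating out `y`
first leaves `Γ(n+m) u^(n-1) / (su+t)^(n+m)`, and the substitution `v = su/(su+t)`, which maps
`[0, 1]` onto `[0, s/(s+t)]`, turns this into the incomplete beta integral.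
-/

open Real Set
open scoped Nat

lemma toReal_measure_le_eq_integral_cdf {Ω : Type*} {mΩ : MeasurableSpace Ω} {P : Measure Ω}
    [IsFiniteMeasure P] {X Y : Ω → ℝ} {μ ν : Measure ℝ} [IsProbabilityMeasure μ]
    [IsProbabilityMeasure ν] (hX : P.map X = μ) (hY : P.map Y = ν) (hXY : IndepFun X Y P) :
    (P {ω | X ω ≤ Y ω}).toReal = ∫ y, cdf μ y ∂ν := by
  have hXm : AEMeasurable X P := aemeasurable_of_map_neZero (by rw [hX]; infer_instance)
  have hYm : AEMeasurable Y P := aemeasurable_of_map_neZero (by rw [hY]; infer_instance)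
  have hle : MeasurableSet {z : ℝ × ℝ | z.1 ≤ z.2} := measurableSet_le measurable_fst measurable_snd
  have hlaw : P {ω | X ω ≤ Y ω} = (μ.prod ν) {z | z.1 ≤ z.2} := by
    rw [← hX, ← hY, ← (indepFun_iff_map_prod_eq_prod_map_map hXm hYm).mp hXY,
      Measure.map_apply_of_aemeasurable (hXm.prodMk hYm) hle]
    rfl
  rw [hlaw, Measure.prod_apply_symm hle, integral_eq_lintegral_of_nonneg_ae
    (ae_of_all _ fun y => cdf_nonneg μ y) (cdf μ).mono.measurable.aestronglyMeasurable]
  simp_rw [ofReal_cdf]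
  rfl

lemma integral_gammaMeasure {a r : ℝ} (ha : 0 < a) (hr : 0 < r) (f : ℝ → ℝ) :
    ∫ y, f y ∂gammaMeasure a r = ∫ y, gammaPDFReal a r y * f y := by
  rw [gammaMeasure, integral_withDensity_eq_integral_toReal_smul (f := gammaPDF a r)
    (measurable_gammaPDFReal a r).ennreal_ofReal (ae_of_all _ fun _ => ENNReal.ofReal_lt_top)]
  simp_rw [gammaPDF, ENNReal.toReal_ofReal (gammaPDFReal_nonneg ha hr _), smul_eq_mul]

lemma cdf_gammaMeasure_eq_intervalIntegral {a r y : ℝ} (ha : 0 < a) (hr : 0 < r) (hy : 0 ≤ y) :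
    cdf (gammaMeasure a r) y = ∫ x in 0..y, gammaPDFReal a r x := by
  rw [cdf_gammaMeasure_eq_integral ha hr, intervalIntegral.integral_of_le hy,
    ← integral_Icc_eq_integral_Ioc, setIntegral_eq_of_subset_of_forall_sdiff_eq_zero
      measurableSet_Iic Icc_subset_Iic_self]
  rintro x ⟨hxy, hx⟩
  exact if_neg fun hx0 => hx ⟨hx0, hxy⟩

lemma gammaPDFReal_mul_cdf_gammaMeasure (n m : ℕ) {s t y : ℝ} (hs : 0 < s) (ht : 0 < t)
    (hy : 0 ≤ y) :
    gammaPDFReal (m + 1) t y * cdf (gammaMeasure (n + 1) s) y =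
      s ^ (n + 1) * t ^ (m + 1) / (n ! * m !) *
        ∫ u in 0..1, u ^ n * y ^ (n + m + 1) * exp (-((s * u + t) * y)) := by
  have hpow : ∀ (k : ℕ) (x : ℝ), x ^ ((k : ℝ) + 1) = x ^ (k + 1) := fun k x => by
    rw [← rpow_natCast, Nat.cast_add_one]
  have hscale := intervalIntegral.smul_integral_comp_mul_left (a := 0) (b := 1)
    (gammaPDFReal (n + 1) s) y
  rw [mul_zero, mul_one, smul_eq_mul] at hscale
  rw [cdf_gammaMeasure_eq_intervalIntegral (by positivity) hs hy, ← hscale,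
    ← intervalIntegral.integral_const_mul, ← intervalIntegral.integral_const_mul,
    ← intervalIntegral.integral_const_mul]
  refine intervalIntegral.integral_congr fun u hu => ?_
  rw [uIcc_of_le zero_le_one] at hu
  have hexp : exp (-((s * u + t) * y)) = exp (-(t * y)) * exp (-(s * (y * u))) := by
    rw [← exp_add]; ring_nf
  simp only [gammaPDFReal, if_pos hy, if_pos (mul_nonneg hy hu.1), add_sub_cancel_right,
    rpow_natCast, hpow, Gamma_nat_eq_factorial, hexp]
  field_simp
  ring

lemma integral_Ioi_pow_mul_exp_neg_mul (k : ℕ) {r : ℝ} (hr : 0 < r) :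
    ∫ y in Ioi 0, y ^ k * exp (-(r * y)) = k ! / r ^ (k + 1) := by
  have h := integral_rpow_mul_exp_neg_mul_Ioi (a := k + 1) (by positivity) hr
  simp_rw [add_sub_cancel_right, rpow_natCast, Gamma_nat_eq_factorial] at h
  rw [← Nat.cast_add_one, rpow_natCast, one_div, inv_pow] at h
  rw [h, div_eq_inv_mul]

lemma integral_Ioi_intervalIntegral_pow_mul_exp_neg (n k : ℕ) {s t : ℝ} (hs : 0 ≤ s)
    (ht : 0 < t) :
    ∫ y in Ioi 0, ∫ u in 0..1, u ^ n * y ^ k * exp (-((s * u + t) * y)) =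
      k ! * ∫ u in 0..1, u ^ n / (s * u + t) ^ (k + 1) := by
  have hpos : ∀ u ∈ Ioc (0 : ℝ) 1, 0 < s * u + t := fun u hu => by nlinarith [hu.1]
  have hdom : IntegrableOn (fun y => y ^ k * exp (-(t * y))) (Ioi 0) :=
    .of_integral_ne_zero (by rw [integral_Ioi_pow_mul_exp_neg_mul k ht]; positivity)
  have hint : Integrable (Function.uncurry fun y u => u ^ n * y ^ k * exp (-((s * u + t) * y)))
      ((volume.restrict (Ioi 0)).prod (volume.restrict (Ioc 0 1))) := by
    refine (hdom.mul_prod (integrableOn_const (C := (1 : ℝ)) measure_Ioc_lt_top.ne)).mono'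
      (Continuous.aestronglyMeasurable (by fun_prop)) ?_
    rw [Measure.prod_restrict]
    filter_upwards [ae_restrict_mem (measurableSet_Ioi.prod measurableSet_Ioc)]
      with ⟨y, u⟩ ⟨hy, hu⟩
    have hy : 0 < y := hy
    simp only [Function.uncurry_apply_pair, mul_one]
    rw [Real.norm_of_nonneg (by have := hu.1; positivity)]
    calc u ^ n * y ^ k * exp (-((s * u + t) * y)) ≤ 1 * y ^ k * exp (-(t * y)) := by
          gcongr
          · exact pow_le_one₀ hu.1.le hu.2
          · nlinarith [mul_nonneg (mul_nonneg hs hu.1.le) hy.le]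
      _ = y ^ k * exp (-(t * y)) := by rw [one_mul]
  simp_rw [intervalIntegral.integral_of_le zero_le_one]
  rw [integral_integral_swap hint, ← integral_const_mul]
  refine setIntegral_congr_fun measurableSet_Ioc fun u hu => ?_
  simp_rw [mul_assoc, integral_const_mul, integral_Ioi_pow_mul_exp_neg_mul k (hpos u hu)]
  ring

lemma integral_pow_mul_one_sub_pow_eq_integral_div_pow (n m : ℕ) {s t : ℝ} (hs : 0 ≤ s)
    (ht : 0 < t) :
    ∫ v in 0..s / (s + t), v ^ n * (1 - v) ^ m =
      s ^ (n + 1) * t ^ (m + 1) * ∫ u in 0..1, u ^ n / (s * u + t) ^ (n + m + 2) := by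
  have hpos : ∀ u ∈ uIcc (0 : ℝ) 1, 0 < s * u + t := fun u hu => by
    rw [uIcc_of_le zero_le_one] at hu
    nlinarith [hu.1]
  have hderiv : ∀ u ∈ uIcc (0 : ℝ) 1,
      HasDerivAt (fun u => s * u / (s * u + t)) (s * t / (s * u + t) ^ 2) u := fun u hu => by
    refine (((hasDerivAt_id u).const_mul s).div (((hasDerivAt_id u).const_mul s).add_const t)
      (hpos u hu).ne').congr_deriv ?_
    simp only [id, mul_one]
    ring
  have hcont : ContinuousOn (fun u => s * t / (s * u + t) ^ 2) (uIcc 0 1) :=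
    continuousOn_const.div (by fun_prop) fun u hu => (pow_pos (hpos u hu) 2).ne'
  have hsubst := intervalIntegral.integral_comp_mul_deriv hderiv hcont
    (g := fun v => v ^ n * (1 - v) ^ m) (by fun_prop)
  simp only [mul_zero, zero_div, mul_one] at hsubst
  rw [← hsubst, ← intervalIntegral.integral_const_mul]
  refine intervalIntegral.integral_congr fun u hu => ?_
  have hu := (hpos u hu).ne'
  have hcompl : 1 - s * u / (s * u + t) = t / (s * u + t) := by field_simp; ring
  simp only [Function.comp_apply, hcompl]
  rw [div_pow, div_pow]
  field_simp
  ring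

lemma integral_gammaPDFReal_mul_cdf_gammaMeasure (n m : ℕ) {s t : ℝ} (hs : 0 < s) (ht : 0 < t) :
    ∫ y, gammaPDFReal (m + 1) t y * cdf (gammaMeasure (n + 1) s) y =
      regIncBeta (n + 1) (m + 1) (s / (s + t)) := by
  have hsupp : ∀ y ∉ Ici (0 : ℝ), gammaPDFReal (m + 1) t y * cdf (gammaMeasure (n + 1) s) y = 0 :=
    fun y hy => by rw [gammaPDFReal, if_neg (notMem_Ici.mp hy).not_ge, zero_mul]
  rw [← setIntegral_eq_integral_of_forall_compl_eq_zero hsupp, integral_Ici_eq_integral_Ioi,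
    setIntegral_congr_fun measurableSet_Ioi
      fun y hy => gammaPDFReal_mul_cdf_gammaMeasure n m hs ht (le_of_lt hy),
    integral_const_mul, integral_Ioi_intervalIntegral_pow_mul_exp_neg n (n + m + 1) hs.le ht,
    regIncBeta, Nat.add_sub_cancel, Nat.add_sub_cancel,
    integral_pow_mul_one_sub_pow_eq_integral_div_pow n m hs.le ht]
  push_cast
  rw [show (n : ℝ) + 1 + (m + 1) = ↑(n + m + 1) + 1 by push_cast; ring]
  simp only [Gamma_nat_eq_factorial]
  field_simp

/-- If `X ~ Gamma(n, s)` and `Y ~ Gamma(m, t)` are independent, then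
`Pr[X ≤ Y] = I_p(n, m)` with `p = s / (s + t)`. -/
theorem prob_le_eq_regIncBeta
    {Ω : Type*} {mΩ : MeasurableSpace Ω} (P : Measure Ω) [IsProbabilityMeasure P]
    (n m : ℕ) (hn : 0 < n) (hm : 0 < m) (s t : ℝ) (hs : 0 < s) (ht : 0 < t)
    (X Y : Ω → ℝ)
    (hX : Measure.map X P = gammaMeasure n s)
    (hY : Measure.map Y P = gammaMeasure m t)
    (hXY : IndepFun X Y P) :
    (P {ω | X ω ≤ Y ω}).toReal = regIncBeta n m (s / (s + t)) := by
  obtain ⟨n, rfl⟩ : ∃ k, n = k + 1 := ⟨n - 1, by omega⟩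
  obtain ⟨m, rfl⟩ : ∃ k, m = k + 1 := ⟨m - 1, by omega⟩
  push_cast at hX hY ⊢
  have := isProbabilityMeasure_gammaMeasure (a := n + 1) (by positivity) hs
  have := isProbabilityMeasure_gammaMeasure (a := m + 1) (by positivity) ht
  rw [toReal_measure_le_eq_integral_cdf hX hY hXY, integral_gammaMeasure (by positivity) ht]
  exact integral_gammaPDFReal_mul_cdf_gammaMeasure n m hs ht
end

section
/- Let n and m be positive integers and s, t > 0. Then ∫_0^∞ (γ(n, s y)/Γ(n)) · (t^m/Γ(m)) · y^{m−1} e^{−t y} dy = I_p(n, m), where p = s/(s+t). In words: integrating the Gamma(n, s) cumulative distribution function evaluated at y against the Gamma(m, t) density yields the regularized incomplete beta function at p. -/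
/-!
Both sides equal `1 - ∑_{k<n} C(k+m-1, k) p^k (1-p)^m`. Integrating by parts in `n`, the
`Gamma(n, 1)` c.d.f. is the Poisson tail `1 - ∑_{k<n} e^{-x} x^k / k!` and `I_p(n, m)` telescopes
into the same negative binomial tail. Against the `Gamma(m, t)` density, the Poisson weight at
`x = s y` integrates, by one Gamma integral, to exactly the `k`-th negative binomial weight with
`p = s/(s+t)`.
-/

open MeasureTheory

noncomputable def lowerIncGamma (n : ℕ) (x : ℝ) : ℝ :=
  ∫ u in (0:ℝ)..x, u ^ (n - 1) * Real.exp (-u)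

open Real Set

lemma integrableOn_pow_mul_exp_neg_mul_Ioi (j : ℕ) {c : ℝ} (hc : 0 < c) :
    IntegrableOn (fun y : ℝ => y ^ j * exp (-(c * y))) (Ioi 0) := by
  refine (integrableOn_rpow_mul_exp_neg_mul_rpow (s := j)
    (neg_one_lt_zero.trans_le j.cast_nonneg) one_pos hc).congr_fun (fun y _ => ?_) measurableSet_Ioi
  simp [rpow_natCast]

lemma integral_pow_mul_exp_neg_mul_Ioi (j : ℕ) {c : ℝ} (hc : 0 < c) :
    ∫ y in Ioi 0, y ^ j * exp (-(c * y)) = Gamma (j + 1) / c ^ (j + 1) := by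
  have h := integral_rpow_mul_exp_neg_mul_Ioi (a := j + 1) (by positivity) hc
  simp only [add_sub_cancel_right, rpow_natCast] at h
  rw [h, ← Nat.cast_add_one, rpow_natCast, Nat.cast_add_one, one_div, inv_pow]
  ring

noncomputable def poissonWeight (k : ℕ) (x : ℝ) : ℝ := x ^ k * exp (-x) / Gamma (k + 1)

noncomputable def negBinomialWeight (m k : ℕ) (p : ℝ) : ℝ :=
  Gamma (k + m) / (Gamma (k + 1) * Gamma m) * p ^ k * (1 - p) ^ m

-- `0 ^ N` is the boundary term at `0`; it lets the case `N = 0`, `γ(1, x) = 1 - e^{-x}`,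
-- share the recurrence.
lemma lowerIncGamma_succ (N : ℕ) (x : ℝ) :
    lowerIncGamma (N + 1) x = N * lowerIncGamma N x + 0 ^ N - x ^ N * exp (-x) := by
  have hderiv : ∀ u ∈ uIcc 0 x, HasDerivAt (fun u => -(u ^ N * exp (-u)))
      (u ^ N * exp (-u) - N * (u ^ (N - 1) * exp (-u))) u := by
    intro u _
    exact ((hasDerivAt_pow N u).mul (hasDerivAt_neg u).exp).neg.congr_deriv (by ring)
  have hint : ∀ k : ℕ, IntervalIntegrable (fun u : ℝ => u ^ k * exp (-u)) volume 0 x :=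
    fun k => (by fun_prop : Continuous fun u : ℝ => u ^ k * exp (-u)).intervalIntegrable _ _
  have hftc := intervalIntegral.integral_eq_sub_of_hasDerivAt hderiv
    ((hint N).sub ((hint (N - 1)).const_mul _))
  rw [intervalIntegral.integral_sub (hint N) ((hint (N - 1)).const_mul _),
    intervalIntegral.integral_const_mul] at hftc
  simp only [lowerIncGamma, Nat.add_sub_cancel]
  simp only [neg_zero, exp_zero, mul_one] at hftc
  linarith

lemma lowerIncGamma_div_Gamma_eq_one_sub_sum {n : ℕ} (hn : 0 < n) (x : ℝ) :
    lowerIncGamma n x / Gamma n = 1 - ∑ k ∈ Finset.range n, poissonWeight k x := by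
  induction n, hn using Nat.le_induction with
  | base => simpa [poissonWeight] using lowerIncGamma_succ 0 x
  | succ n hn ih =>
    have hΓ : Gamma (n + 1) = n * Gamma n := Gamma_add_one (by positivity)
    rw [Finset.sum_range_succ, ← sub_sub, ← ih, lowerIncGamma_succ, poissonWeight, Nat.cast_add_one,
      hΓ, zero_pow (by omega : n ≠ 0)]
    field_simp
    ring

lemma integral_pow_succ_mul_one_sub_pow (N M : ℕ) (p : ℝ) :
    (N + 1) * (∫ u in 0..p, u ^ N * (1 - u) ^ M)
      - (N + M + 2) * (∫ u in 0..p, u ^ (N + 1) * (1 - u) ^ M)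
      = p ^ (N + 1) * (1 - p) ^ (M + 1) := by
  have hderiv : ∀ u ∈ uIcc 0 p, HasDerivAt (fun u : ℝ => u ^ (N + 1) * (1 - u) ^ (M + 1))
      ((N + 1) * (u ^ N * (1 - u) ^ M) - (N + M + 2) * (u ^ (N + 1) * (1 - u) ^ M)) u := by
    intro u _
    refine ((hasDerivAt_pow (N + 1) u).mul
      ((hasDerivAt_pow (M + 1) (1 - u)).comp u ((hasDerivAt_id u).const_sub 1))).congr_deriv ?_
    simp only [Function.comp_apply, Nat.add_sub_cancel, Nat.cast_add_one]
    ring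
  have hint : ∀ k : ℕ, IntervalIntegrable (fun u : ℝ => u ^ k * (1 - u) ^ M) volume 0 p :=
    fun k => (by fun_prop : Continuous fun u : ℝ => u ^ k * (1 - u) ^ M).intervalIntegrable _ _
  have hftc := intervalIntegral.integral_eq_sub_of_hasDerivAt hderiv
    (((hint N).const_mul _).sub ((hint (N + 1)).const_mul _))
  rw [intervalIntegral.integral_sub ((hint N).const_mul _) ((hint (N + 1)).const_mul _),
    intervalIntegral.integral_const_mul, intervalIntegral.integral_const_mul] at hftc
  simpa using hftc

lemma regIncBeta_one {m : ℕ} (hm : 0 < m) (p : ℝ) : regIncBeta 1 m p = 1 - (1 - p) ^ m := by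
  obtain ⟨M, rfl⟩ := Nat.exists_eq_add_one.mpr hm
  have hΓ : Gamma (1 + (M + 1)) = (M + 1) * Gamma (M + 1) := by
    rw [add_comm, Gamma_add_one (by positivity)]
  simp only [regIncBeta, Nat.cast_one, Nat.cast_add, Gamma_one, Nat.sub_self, pow_zero, one_mul,
    Nat.add_sub_cancel, intervalIntegral.integral_comp_sub_left (fun u => u ^ M),
    integral_pow, hΓ]
  field_simp
  ring

lemma regIncBeta_succ {n m : ℕ} (hn : 0 < n) (hm : 0 < m) (p : ℝ) :
    regIncBeta (n + 1) m p = regIncBeta n m p - negBinomialWeight m n p := by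
  obtain ⟨N, rfl⟩ := Nat.exists_eq_add_one.mpr hn
  obtain ⟨M, rfl⟩ := Nat.exists_eq_add_one.mpr hm
  have hstep := integral_pow_succ_mul_one_sub_pow N M p
  have hΓN : Gamma (N + 1 + 1) = (N + 1) * Gamma (N + 1) := Gamma_add_one (by positivity)
  have hΓNM : Gamma (N + 1 + 1 + (M + 1)) = (N + M + 2) * Gamma (N + 1 + (M + 1)) := by
    rw [show (N : ℝ) + 1 + 1 + (M + 1) = N + 1 + (M + 1) + 1 by ring, Gamma_add_one (by positivity)]
    ring
  simp only [regIncBeta, negBinomialWeight, Nat.cast_add, Nat.cast_one, Nat.add_sub_cancel,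
    hΓN, hΓNM]
  field_simp
  linear_combination -hstep

lemma regIncBeta_eq_one_sub_sum {n m : ℕ} (hn : 0 < n) (hm : 0 < m) (p : ℝ) :
    regIncBeta n m p = 1 - ∑ k ∈ Finset.range n, negBinomialWeight m k p := by
  induction n, hn using Nat.le_induction with
  | base =>
    have hΓ : Gamma m ≠ 0 := (Gamma_pos_of_pos (by exact_mod_cast hm)).ne'
    simp [regIncBeta_one hm, negBinomialWeight, hΓ]
  | succ n hn ih => rw [regIncBeta_succ hn hm, ih, Finset.sum_range_succ, sub_sub]

noncomputable def gammaDensity (m : ℕ) (t y : ℝ) : ℝ :=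
  t ^ m / Gamma m * y ^ (m - 1) * exp (-(t * y))

lemma poissonWeight_mul_gammaDensity (k M : ℕ) (s t y : ℝ) :
    poissonWeight k (s * y) * gammaDensity (M + 1) t y
      = s ^ k * t ^ (M + 1) / (Gamma (k + 1) * Gamma (M + 1))
          * (y ^ (k + M) * exp (-((s + t) * y))) := by
  simp only [poissonWeight, gammaDensity, Nat.add_sub_cancel, Nat.cast_add_one, add_mul, neg_add,
    exp_add, mul_pow, pow_add]
  ring

lemma integrableOn_poissonWeight_mul_gammaDensity (k : ℕ) {m : ℕ} (hm : 0 < m) {s t : ℝ}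
    (hs : 0 ≤ s) (ht : 0 < t) :
    IntegrableOn (fun y => poissonWeight k (s * y) * gammaDensity m t y) (Ioi 0) := by
  obtain ⟨M, rfl⟩ := Nat.exists_eq_add_one.mpr hm
  simp only [poissonWeight_mul_gammaDensity]
  exact (integrableOn_pow_mul_exp_neg_mul_Ioi (k + M) (by linarith)).const_mul _

lemma integral_poissonWeight_mul_gammaDensity (k : ℕ) {m : ℕ} (hm : 0 < m) {s t : ℝ}
    (hs : 0 ≤ s) (ht : 0 < t) :
    ∫ y in Ioi 0, poissonWeight k (s * y) * gammaDensity m t y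
      = negBinomialWeight m k (s / (s + t)) := by
  obtain ⟨M, rfl⟩ := Nat.exists_eq_add_one.mpr hm
  have hst : 0 < s + t := by linarith
  simp only [poissonWeight_mul_gammaDensity, integral_const_mul,
    integral_pow_mul_exp_neg_mul_Ioi _ hst, negBinomialWeight]
  rw [one_sub_div hst.ne', add_sub_cancel_left, div_pow, div_pow]
  push_cast
  rw [show (k : ℝ) + M + 1 = k + (M + 1) by ring]
  field_simp
  ring

lemma integrableOn_gammaDensity {m : ℕ} (hm : 0 < m) {t : ℝ} (ht : 0 < t) :
    IntegrableOn (gammaDensity m t) (Ioi 0) := by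
  simpa [poissonWeight] using integrableOn_poissonWeight_mul_gammaDensity 0 hm le_rfl ht

lemma integral_gammaDensity {m : ℕ} (hm : 0 < m) {t : ℝ} (ht : 0 < t) :
    ∫ y in Ioi 0, gammaDensity m t y = 1 := by
  have hΓ : Gamma m ≠ 0 := (Gamma_pos_of_pos (by exact_mod_cast hm)).ne'
  simpa [poissonWeight, negBinomialWeight, hΓ] using
    integral_poissonWeight_mul_gammaDensity 0 hm le_rfl ht

/-- Integrating the `Gamma(n, s)` c.d.f. `γ(n, s y)/Γ(n)` against the
`Gamma(m, t)` density gives the regularized incomplete beta function at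
`p = s/(s+t)`. -/
theorem integral_lowerIncGamma_mul_gammaDensity
    (n m : ℕ) (hn : 0 < n) (hm : 0 < m) (s t : ℝ) (hs : 0 < s) (ht : 0 < t) :
    ∫ y in Set.Ioi (0:ℝ),
        (lowerIncGamma n (s * y) / Real.Gamma n) *
          (t ^ m / Real.Gamma m * y ^ (m - 1) * Real.exp (-(t * y))) =
      regIncBeta n m (s / (s + t)) := by
  have hterm (k : ℕ) := integrableOn_poissonWeight_mul_gammaDensity k hm hs.le ht
  calc ∫ y in Ioi 0, lowerIncGamma n (s * y) / Gamma n * gammaDensity m t y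
      = ∫ y in Ioi 0, (gammaDensity m t y
          - ∑ k ∈ Finset.range n, poissonWeight k (s * y) * gammaDensity m t y) := by
        simp_rw [lowerIncGamma_div_Gamma_eq_one_sub_sum hn, sub_mul, one_mul, Finset.sum_mul]
    _ = 1 - ∑ k ∈ Finset.range n, negBinomialWeight m k (s / (s + t)) := by
        rw [integral_sub (integrableOn_gammaDensity hm ht)
            (integrable_finsetSum _ fun k _ => hterm k),
          integral_finsetSum _ fun k _ => hterm k, integral_gammaDensity hm ht]
        simp_rw [integral_poissonWeight_mul_gammaDensity _ hm hs.le ht]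
    _ = regIncBeta n m (s / (s + t)) := (regIncBeta_eq_one_sub_sum hn hm _).symm
end

section
/- Let n and m be positive integers, s, t > 0, and let X and Y be independent real random variables with the Gamma(n, s) and Gamma(m, t) distributions, respectively. Then for every natural number k: E[X^k · 1_{X ≤ Y}] = (Γ(n+k)/(s^k Γ(n))) · I_p(n+k, m), where p = s/(s+t). Consequently, the k-th moment of X conditional on the event {X ≤ Y} equals (Γ(n+k)/(s^k Γ(n))) · I_p(n+k, m)/I_p(n, m). -/
open MeasureTheory ProbabilityTheory

/-!
Since `x ^ k` times the `Gamma(n, s)` density is `Γ(n + k) / (s ^ k Γ(n))` times the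
`Gamma(n + k, s)` density, `E[X ^ k; X ≤ Y]` is that constant times `P(X' ≤ Y)` for
`X' ~ Gamma(n + k, s)`, so everything reduces to `P(X ≤ Y) = ∫ f_Y(y) P(X ≤ y) dy`.
In the inner integral substitute `x = (t y / s) · w / (1 - w)`, i.e. `w = s x / (s x + t y)`,
which maps `w ∈ [0, s / (s + t)]` onto `x ∈ [0, y]`. In the variables `(w, y)` the integrand
factors as the `Beta(n, m)` density in `w` times the `Gamma(n + m, t / (1 - w))` density in `y`;
integrating out `y` by Tonelli leaves `I_p(n, m)`.
-/

open Real Set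
open scoped ENNReal

namespace ProbabilityTheory

theorem IndepFun.setIntegral_preimage_prodMk {Ω α β E : Type*}
    {mΩ : MeasurableSpace Ω} {mα : MeasurableSpace α} {mβ : MeasurableSpace β}
    [NormedAddCommGroup E] [NormedSpace ℝ E] {P : Measure Ω} [IsFiniteMeasure P]
    {X : Ω → α} {Y : Ω → β} (hXY : IndepFun X Y P) (hX : AEMeasurable X P)
    (hY : AEMeasurable Y P) {S : Set (α × β)} (hS : MeasurableSet S) {g : α × β → E}
    (hg : AEStronglyMeasurable g ((P.map X).prod (P.map Y))) :
    ∫ ω in (fun ω ↦ (X ω, Y ω)) ⁻¹' S, g (X ω, Y ω) ∂P =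
      ∫ q in S, g q ∂(P.map X).prod (P.map Y) := by
  rw [← (indepFun_iff_map_prod_eq_prod_map_map hX hY).1 hXY] at hg ⊢
  exact (setIntegral_map hS hg (hX.prodMk hY)).symm

@[fun_prop]
lemma measurable_gammaPDF (a r : ℝ) : Measurable (gammaPDF a r) :=
  (measurable_gammaPDFReal a r).ennreal_ofReal

lemma measurable_gammaPDF_uncurry (a : ℝ) :
    Measurable fun q : ℝ × ℝ ↦ gammaPDF a q.1 q.2 :=
  (Measurable.ite (measurableSet_le measurable_const measurable_snd) (by fun_prop)
    measurable_const).ennreal_ofReal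

lemma gammaPDFReal_natCast_of_nonneg {n : ℕ} (hn : 0 < n) (r : ℝ) {x : ℝ} (hx : 0 ≤ x) :
    gammaPDFReal n r x = r ^ n / Gamma n * x ^ (n - 1) * exp (-(r * x)) := by
  rw [gammaPDFReal, if_pos hx, ← Nat.cast_one, ← Nat.cast_sub hn, rpow_natCast, rpow_natCast]

lemma ae_nonneg_gammaMeasure (a r : ℝ) : ∀ᵐ x ∂gammaMeasure a r, 0 ≤ x := by
  rw [gammaMeasure, ae_withDensity_iff (by fun_prop)]
  filter_upwards with x hx
  by_contra! hneg
  exact hx (gammaPDF_of_neg hneg)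

lemma gammaPDF_mul_ofReal_pow {n : ℕ} (hn : 0 < n) (k : ℕ) {r : ℝ} (hr : 0 < r) (x : ℝ) :
    gammaPDF n r x * ENNReal.ofReal (x ^ k) =
      ENNReal.ofReal (Gamma (n + k) / (r ^ k * Gamma n)) * gammaPDF (n + k : ℕ) r x := by
  rcases lt_or_ge x 0 with hx | hx
  · simp [gammaPDF_of_neg hx]
  have hΓ : 0 < Gamma n := Gamma_pos_of_pos (by positivity)
  have hΓk : 0 < Gamma (n + k) := Gamma_pos_of_pos (by positivity)
  rw [gammaPDF, gammaPDF, gammaPDFReal_natCast_of_nonneg hn r hx,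
    gammaPDFReal_natCast_of_nonneg (by omega) r hx, ← ENNReal.ofReal_mul (by positivity),
    ← ENNReal.ofReal_mul (by positivity), show n + k - 1 = n - 1 + k by omega]
  congr 1
  push_cast
  simp only [pow_add]
  field_simp

lemma withDensity_ofReal_pow_gammaMeasure {n : ℕ} (hn : 0 < n) (k : ℕ) {r : ℝ} (hr : 0 < r) :
    (gammaMeasure n r).withDensity (fun x ↦ ENNReal.ofReal (x ^ k)) =
      ENNReal.ofReal (Gamma (n + k) / (r ^ k * Gamma n)) • gammaMeasure (n + k : ℕ) r := by
  rw [gammaMeasure, gammaMeasure, ← withDensity_mul _ (by fun_prop) (by fun_prop),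
    ← withDensity_smul _ (by fun_prop)]
  congr 1
  ext x
  exact gammaPDF_mul_ofReal_pow hn k hr x

lemma setIntegral_fst_pow_gammaMeasure_prod {n : ℕ} (hn : 0 < n) (k : ℕ) {r : ℝ} (hr : 0 < r)
    {β : Type*} {mβ : MeasurableSpace β} (ν : Measure β) [SFinite ν] {S : Set (ℝ × β)}
    (hS : MeasurableSet S) :
    ∫ q in S, q.1 ^ k ∂(gammaMeasure n r).prod ν =
      Gamma (n + k) / (r ^ k * Gamma n) * ((gammaMeasure (n + k : ℕ) r).prod ν).real S := by
  have hnonneg : 0 ≤ᵐ[((gammaMeasure n r).prod ν).restrict S] fun q ↦ q.1 ^ k :=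
    ae_restrict_of_ae <| Measure.quasiMeasurePreserving_fst.ae
      ((ae_nonneg_gammaMeasure n r).mono fun x hx ↦ pow_nonneg hx k)
  rw [integral_eq_lintegral_of_nonneg_ae hnonneg (by fun_prop), ← withDensity_apply _ hS,
    ← prod_withDensity_left (f := fun x ↦ ENNReal.ofReal (x ^ k)) (by fun_prop),
    withDensity_ofReal_pow_gammaMeasure hn k hr, Measure.prod_smul_left, Measure.smul_apply,
    smul_eq_mul, ENNReal.toReal_mul, ENNReal.toReal_ofReal (by positivity), measureReal_def]

lemma _root_.hasDerivAt_mul_div_one_sub (c : ℝ) {w : ℝ} (hw : w ≠ 1) :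
    HasDerivAt (fun w ↦ c * (w / (1 - w))) (c / (1 - w) ^ 2) w := by
  have h : 1 - w ≠ 0 := sub_ne_zero.2 hw.symm
  refine (((hasDerivAt_id' w).div ((hasDerivAt_id' w).const_sub 1) h).const_mul c).congr_deriv ?_
  field_simp
  ring

lemma _root_.monotoneOn_mul_div_one_sub {c : ℝ} (hc : 0 ≤ c) :
    MonotoneOn (fun w ↦ c * (w / (1 - w))) (Iio 1) := by
  intro w₁ hw₁ w₂ hw₂ h
  refine mul_le_mul_of_nonneg_left ?_ hc
  rw [div_le_div_iff₀ (sub_pos.2 hw₁) (sub_pos.2 hw₂)]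
  nlinarith

lemma gammaMeasure_Iic_eq_lintegral_comp_mul_div_one_sub (a r : ℝ) {c p : ℝ} (hc : 0 ≤ c)
    (hp₀ : 0 ≤ p) (hp₁ : p < 1) :
    gammaMeasure a r (Iic (c * (p / (1 - p)))) =
      ∫⁻ w in Icc 0 p, ENNReal.ofReal (c / (1 - w) ^ 2) * gammaPDF a r (c * (w / (1 - w))) := by
  have hsub : Icc 0 p ⊆ Iio 1 := fun w hw ↦ hw.2.trans_lt hp₁
  have hderiv (w : ℝ) (hw : w ∈ Icc 0 p) :
      HasDerivAt (fun w ↦ c * (w / (1 - w))) (c / (1 - w) ^ 2) w :=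
    hasDerivAt_mul_div_one_sub c (hsub hw).ne
  have hmono := (monotoneOn_mul_div_one_sub hc).mono hsub
  have himage : (fun w ↦ c * (w / (1 - w))) '' Icc 0 p = Icc 0 (c * (p / (1 - p))) := by
    rw [ContinuousOn.image_Icc_of_monotoneOn hp₀
      (fun w hw ↦ (hderiv w hw).continuousAt.continuousWithinAt) hmono]
    simp
  rw [gammaMeasure, withDensity_apply _ measurableSet_Iic,
    lintegral_Iic_eq_lintegral_Iio_add_Icc _ (by have := hsub ⟨hp₀, le_rfl⟩; positivity),
    lintegral_gammaPDF_of_nonpos le_rfl, zero_add, ← himage,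
    lintegral_image_eq_lintegral_deriv_mul_of_monotoneOn measurableSet_Icc
      (fun w hw ↦ (hderiv w hw).hasDerivWithinAt) hmono]

noncomputable def betaDensity (n m : ℕ) (w : ℝ) : ℝ :=
  Gamma (n + m) / (Gamma n * Gamma m) * (w ^ (n - 1) * (1 - w) ^ (m - 1))

@[fun_prop]
lemma continuous_betaDensity (n m : ℕ) : Continuous (betaDensity n m) := by
  unfold betaDensity
  fun_prop

lemma betaDensity_nonneg (n m : ℕ) {w : ℝ} (hw₀ : 0 ≤ w) (hw₁ : w ≤ 1) :
    0 ≤ betaDensity n m w := by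
  have := sub_nonneg.2 hw₁
  unfold betaDensity
  positivity

lemma regIncBeta_eq_integral_betaDensity (n m : ℕ) (p : ℝ) :
    regIncBeta n m p = ∫ w in 0..p, betaDensity n m w := by
  simp only [betaDensity, intervalIntegral.integral_const_mul]
  rfl

lemma gammaPDFReal_mul_gammaPDFReal_eq_betaDensity_mul {n m : ℕ} (hn : 0 < n) (hm : 0 < m)
    {s t y w : ℝ} (hs : 0 < s) (ht : 0 < t) (hy : 0 ≤ y) (hw₀ : 0 ≤ w) (hw₁ : w < 1) :
    gammaPDFReal m t y * (t * y / s / (1 - w) ^ 2 * gammaPDFReal n s (t * y / s * (w / (1 - w)))) =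
      betaDensity n m w * gammaPDFReal (n + m : ℕ) (t / (1 - w)) y := by
  have h₁ : 1 - w ≠ 0 := (sub_pos.2 hw₁).ne'
  obtain ⟨a, rfl⟩ : ∃ a, n = a + 1 := ⟨n - 1, by omega⟩
  obtain ⟨b, rfl⟩ : ∃ b, m = b + 1 := ⟨m - 1, by omega⟩
  have hexp : exp (-(t * y)) * exp (-(s * (t * y / s * (w / (1 - w))))) =
      exp (-(t / (1 - w) * y)) := by
    rw [← exp_add]
    congr 1
    field_simp
    ring
  rw [gammaPDFReal_natCast_of_nonneg (by omega) _ hy,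
    gammaPDFReal_natCast_of_nonneg (by omega) _ (by have := sub_pos.2 hw₁; positivity),
    gammaPDFReal_natCast_of_nonneg (by omega) _ hy, ← hexp, betaDensity]
  simp only [Nat.add_sub_cancel, show a + 1 + (b + 1) - 1 = a + b + 1 by omega]
  have hΓa : Gamma (a + 1) ≠ 0 := (Gamma_pos_of_pos (by positivity)).ne'
  have hΓb : Gamma (b + 1) ≠ 0 := (Gamma_pos_of_pos (by positivity)).ne'
  have hΓab : Gamma (a + 1 + (b + 1)) ≠ 0 := (Gamma_pos_of_pos (by positivity)).ne'
  push_cast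
  simp only [div_pow, mul_pow, pow_add]
  field_simp

lemma gammaPDF_mul_gammaMeasure_Iic {n m : ℕ} (hn : 0 < n) (hm : 0 < m) {s t : ℝ} (hs : 0 < s)
    (ht : 0 < t) (y : ℝ) :
    gammaPDF m t y * gammaMeasure n s (Iic y) =
      ∫⁻ w in Icc 0 (s / (s + t)),
        ENNReal.ofReal (betaDensity n m w) * gammaPDF (n + m : ℕ) (t / (1 - w)) y := by
  rcases lt_or_ge y 0 with hy | hy
  · simp [gammaPDF_of_neg hy]
  set p := s / (s + t)
  have hp₁ : p < 1 := (div_lt_one (by positivity)).2 (by linarith)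
  have hy' : t * y / s * (p / (1 - p)) = y := by
    simp only [p]
    field_simp [ht.ne']
    ring
  rw [← hy', gammaMeasure_Iic_eq_lintegral_comp_mul_div_one_sub _ _ (by positivity)
      (by positivity) hp₁, hy', ← lintegral_const_mul' (gammaPDF m t y) _ ENNReal.ofReal_ne_top]
  refine setLIntegral_congr_fun measurableSet_Icc fun w hw ↦ ?_
  have hw₁ := hw.2.trans_lt hp₁
  have := sub_pos.2 hw₁
  simp only [gammaPDF]
  rw [← ENNReal.ofReal_mul (by positivity),
    ← ENNReal.ofReal_mul (gammaPDFReal_nonneg (by positivity) ht y),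
    ← ENNReal.ofReal_mul (betaDensity_nonneg n m hw.1 hw₁.le),
    gammaPDFReal_mul_gammaPDFReal_eq_betaDensity_mul hn hm hs ht hy hw.1 hw₁]

theorem gammaMeasure_prod_real_setOf_fst_le_snd {n m : ℕ} (hn : 0 < n) (hm : 0 < m) {s t : ℝ}
    (hs : 0 < s) (ht : 0 < t) :
    ((gammaMeasure n s).prod (gammaMeasure m t)).real {q | q.1 ≤ q.2} =
      regIncBeta n m (s / (s + t)) := by
  have := isProbabilityMeasure_gammaMeasure (a := n) (by positivity) hs
  have := isProbabilityMeasure_gammaMeasure (a := m) (by positivity) ht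
  set p := s / (s + t)
  have hp₁ : p < 1 := (div_lt_one (by positivity)).2 (by linarith)
  have hIic : Measurable fun y ↦ gammaMeasure n s (Iic y) :=
    Monotone.measurable fun _ _ h ↦ measure_mono (Iic_subset_Iic.2 h)
  have hmeas : Measurable fun q : ℝ × ℝ ↦
      ENNReal.ofReal (betaDensity n m q.2) * gammaPDF (n + m : ℕ) (t / (1 - q.2)) q.1 :=
    (by fun_prop : Measurable fun q : ℝ × ℝ ↦ betaDensity n m q.2).ennreal_ofReal.mul
      ((measurable_gammaPDF_uncurry _).comp
        ((by fun_prop : Measurable fun q : ℝ × ℝ ↦ t / (1 - q.2)).prodMk measurable_fst))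
  calc ((gammaMeasure n s).prod (gammaMeasure m t)).real {q | q.1 ≤ q.2}
      = (∫⁻ y, gammaPDF m t y * gammaMeasure n s (Iic y)).toReal := by
        rw [measureReal_def,
          Measure.prod_apply_symm (measurableSet_le measurable_fst measurable_snd)]
        exact congrArg ENNReal.toReal
          (lintegral_withDensity_eq_lintegral_mul _ (measurable_gammaPDF _ _) hIic)
    _ = (∫⁻ w in Icc 0 p, ENNReal.ofReal (betaDensity n m w)).toReal := by
        simp_rw [gammaPDF_mul_gammaMeasure_Iic hn hm hs ht]
        rw [lintegral_lintegral_swap hmeas.aemeasurable]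
        refine congrArg ENNReal.toReal (setLIntegral_congr_fun measurableSet_Icc fun w hw ↦ ?_)
        have := sub_pos.2 (hw.2.trans_lt hp₁)
        rw [lintegral_const_mul _ (measurable_gammaPDF _ _),
          lintegral_gammaPDF_eq_one (by positivity) (by positivity), mul_one]
    _ = ∫ w in Icc 0 p, betaDensity n m w :=
        (integral_eq_lintegral_of_nonneg_ae ((ae_restrict_iff' measurableSet_Icc).2 <|
          ae_of_all _ fun w hw ↦ betaDensity_nonneg n m hw.1 (hw.2.trans hp₁.le))
          (by fun_prop)).symm
    _ = regIncBeta n m p := by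
        rw [integral_Icc_eq_integral_Ioc, ← intervalIntegral.integral_of_le (by positivity),
          regIncBeta_eq_integral_betaDensity]

end ProbabilityTheory

/-- If `X ~ Gamma(n, s)` and `Y ~ Gamma(m, t)` are independent, then for every `k : ℕ`,
`E[X^k ⬝ 1_{X ≤ Y}] = (Γ(n+k)/(s^k Γ(n))) ⬝ I_p(n+k, m)` with `p = s/(s+t)`;
consequently the `k`-th moment of `X` conditional on `{X ≤ Y}` is
`(Γ(n+k)/(s^k Γ(n))) ⬝ I_p(n+k, m)/I_p(n, m)`. -/
theorem moment_on_le_event_eq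
    {Ω : Type*} {mΩ : MeasurableSpace Ω} (P : Measure Ω) [IsProbabilityMeasure P]
    (n m : ℕ) (hn : 0 < n) (hm : 0 < m) (s t : ℝ) (hs : 0 < s) (ht : 0 < t)
    (X Y : Ω → ℝ)
    (hX : Measure.map X P = gammaMeasure n s)
    (hY : Measure.map Y P = gammaMeasure m t)
    (hXY : IndepFun X Y P) (k : ℕ) :
    (∫ ω in {ω | X ω ≤ Y ω}, X ω ^ k ∂P =
        Real.Gamma (n + k) / (s ^ k * Real.Gamma n) *
          regIncBeta (n + k) m (s / (s + t))) ∧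
      (∫ ω in {ω | X ω ≤ Y ω}, X ω ^ k ∂P) / (P {ω | X ω ≤ Y ω}).toReal =
        Real.Gamma (n + k) / (s ^ k * Real.Gamma n) *
          (regIncBeta (n + k) m (s / (s + t)) / regIncBeta n m (s / (s + t))) := by
  have hμ := isProbabilityMeasure_gammaMeasure (a := n) (by positivity) hs
  have hν := isProbabilityMeasure_gammaMeasure (a := m) (by positivity) ht
  have hXm : AEMeasurable X P := .of_map_ne_zero <| by rw [hX]; exact hμ.ne_zero
  have hYm : AEMeasurable Y P := .of_map_ne_zero <| by rw [hY]; exact hν.ne_zero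
  have hle : MeasurableSet {q : ℝ × ℝ | q.1 ≤ q.2} :=
    measurableSet_le measurable_fst measurable_snd
  have hE : {ω | X ω ≤ Y ω} = (fun ω ↦ (X ω, Y ω)) ⁻¹' {q | q.1 ≤ q.2} := rfl
  have hmoment (j : ℕ) : ∫ ω in {ω | X ω ≤ Y ω}, X ω ^ j ∂P =
      Gamma (n + j) / (s ^ j * Gamma n) * regIncBeta (n + j) m (s / (s + t)) := by
    rw [hE, hXY.setIntegral_preimage_prodMk hXm hYm hle (g := fun q ↦ q.1 ^ j) (by fun_prop),
      hX, hY, setIntegral_fst_pow_gammaMeasure_prod hn j hs _ hle,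
      gammaMeasure_prod_real_setOf_fst_le_snd (by omega) hm hs ht]
  have hprob : (P {ω | X ω ≤ Y ω}).toReal = regIncBeta n m (s / (s + t)) := by
    simpa [measureReal_def, (Gamma_pos_of_pos (Nat.cast_pos.2 hn)).ne'] using hmoment 0
  exact ⟨hmoment k, by rw [hmoment k, hprob, mul_div_assoc]⟩
end

section
/- Let n and m be positive integers, s, t > 0, and let X and Y be independent real random variables with the inverse-gamma distributions iG(n, s) and iG(m, t), respectively. Then for every measurable set S ⊆ (0, ∞): Pr[Y ∈ S and X ≥ Y] = ∫_S (γ(n, s/y)/Γ(n)) · (t^m/Γ(m)) · y^{−m−1} e^{−t/y} dy. (Hence the 'lower double inverse-gamma' density of Y on the event {X ≥ Y} is (γ(n, s/y)/Γ(n)) · iG(m,t)-density(y) / I_p(n, m), with p = s/(s+t).) -/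
/-!
Conditioning on `Y = y`, independence gives `Pr[Y ∈ S, X ≥ Y] = ∫_S Pr[X ≥ y] dℙ_Y(y)`. The tail
`Pr[X ≥ y]` of `iG(n, s)` becomes, after the substitution `x = s / u`, the integral of the
`Gamma(n, 1)` density over `(0, s / y)`, i.e. `γ(n, s / y) / Γ(n)`.
-/

open MeasureTheory ProbabilityTheory

/-- The density of the inverse-gamma distribution `iG(n, s)` with shape `n` and
scale `s`: `s^n/Γ(n) ⬝ x^{-n-1} e^{-s/x}` on `(0, ∞)`. -/
noncomputable def invGammaPDFReal (n : ℕ) (s x : ℝ) : ℝ :=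
  if 0 < x then s ^ n / Real.Gamma n * x ^ (-(n : ℤ) - 1) * Real.exp (-(s / x)) else 0

/-- The inverse-gamma measure `iG(n, s)` on `ℝ`. -/
noncomputable def invGammaMeasure (n : ℕ) (s : ℝ) : Measure ℝ :=
  volume.withDensity fun x => ENNReal.ofReal (invGammaPDFReal n s x)

section Independence

variable {Ω α : Type*} {mΩ : MeasurableSpace Ω} [MeasurableSpace α] [TopologicalSpace α]
  [OpensMeasurableSpace α] [SecondCountableTopology α] [PartialOrder α] [OrderClosedTopology α]

theorem ProbabilityTheory.IndepFun.measure_mem_and_ge {P : Measure Ω} [IsFiniteMeasure P]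
    {X Y : Ω → α} (hX : AEMeasurable X P) (hY : AEMeasurable Y P) (hXY : IndepFun X Y P)
    {S : Set α} (hS : MeasurableSet S) :
    P ({ω | Y ω ∈ S} ∩ {ω | X ω ≥ Y ω}) = ∫⁻ y in S, P.map X (Set.Ici y) ∂P.map Y := by
  set E : Set (α × α) := Prod.snd ⁻¹' S ∩ {p | p.2 ≤ p.1}
  have hE : MeasurableSet E :=
    (hS.preimage measurable_snd).inter (measurableSet_le measurable_snd measurable_fst)
  have hslice : (fun y => P.map X ((fun x => (x, y)) ⁻¹' E)) =
      S.indicator fun y => P.map X (Set.Ici y) := by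
    ext y
    by_cases hy : y ∈ S
    · rw [Set.indicator_of_mem hy]
      congr 1 with x
      simp [E, hy]
    · rw [Set.indicator_of_notMem hy, ← measure_empty (μ := P.map X)]
      congr 1 with x
      simp [E, hy]
  rw [show {ω | Y ω ∈ S} ∩ {ω | X ω ≥ Y ω} = (fun ω => (X ω, Y ω)) ⁻¹' E from rfl,
    ← Measure.map_apply_of_aemeasurable (hX.prodMk hY) hE,
    (indepFun_iff_map_prod_eq_prod_map_map hX hY).mp hXY, Measure.prod_apply_symm hE, hslice,
    lintegral_indicator hS]

end Independence

section InverseGamma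

open Real Set

lemma measurable_invGammaPDFReal (n : ℕ) (s : ℝ) : Measurable (invGammaPDFReal n s) :=
  Measurable.ite measurableSet_Ioi (by fun_prop) measurable_const

lemma invGammaPDFReal_nonneg (n : ℕ) {s : ℝ} (hs : 0 ≤ s) (x : ℝ) :
    0 ≤ invGammaPDFReal n s x := by
  unfold invGammaPDFReal
  split_ifs with hx
  · have := Gamma_nonneg_of_nonneg (n.cast_nonneg (α := ℝ))
    have := zpow_nonneg hx.le (-(n : ℤ) - 1)
    positivity
  · exact le_rfl

lemma continuous_lowerIncGamma (n : ℕ) : Continuous (lowerIncGamma n) :=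
  intervalIntegral.continuous_primitive (fun _ _ =>
    (by fun_prop : Continuous fun u : ℝ => u ^ (n - 1) * exp (-u)).intervalIntegrable _ _) 0

lemma lowerIncGamma_pos (n : ℕ) {x : ℝ} (hx : 0 < x) : 0 < lowerIncGamma n x :=
  intervalIntegral.intervalIntegral_pos_of_pos_on
    ((by fun_prop : Continuous fun u : ℝ => u ^ (n - 1) * exp (-u)).intervalIntegrable _ _)
    (fun u hu => by have := hu.1; positivity) hx

lemma lowerIncGamma_div_Gamma_nonneg (n : ℕ) {x : ℝ} (hx : 0 ≤ x) :
    0 ≤ lowerIncGamma n x / Gamma n :=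
  div_nonneg (intervalIntegral.integral_nonneg hx fun u hu => by have := hu.1; positivity)
    (Gamma_nonneg_of_nonneg n.cast_nonneg)

lemma image_const_div_Ioo_zero {s a : ℝ} (hs : 0 < s) (ha : 0 < a) :
    (fun u => s / u) '' Ioo 0 a = Ioi (s / a) := by
  ext x
  constructor
  · rintro ⟨u, ⟨hu, hua⟩, rfl⟩
    exact div_lt_div_of_pos_left hs hu hua
  · intro hx
    have hx0 : 0 < x := (div_pos hs ha).trans hx
    refine ⟨s / x, ⟨div_pos hs hx0, ?_⟩, div_div_cancel₀ hs.ne'⟩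
    rwa [div_lt_comm₀ hx0 ha]

lemma hasDerivAt_const_div (s : ℝ) {u : ℝ} (hu : u ≠ 0) :
    HasDerivAt (fun u => s / u) (-(s / u ^ 2)) u := by
  simpa [div_eq_mul_inv] using (hasDerivAt_inv hu).const_mul s

lemma injective_const_div {s : ℝ} (hs : s ≠ 0) : Function.Injective fun u : ℝ => s / u := by
  intro a b h
  simpa only [div_eq_mul_inv, mul_right_inj' hs, inv_inj] using h

lemma mul_invGammaPDFReal_const_div {n : ℕ} (hn : 0 < n) {s u : ℝ} (hs : 0 < s) (hu : 0 < u) :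
    s / u ^ 2 * invGammaPDFReal n s (s / u) = u ^ (n - 1) * exp (-u) / Gamma n := by
  obtain ⟨k, rfl⟩ := Nat.exists_eq_add_one_of_ne_zero hn.ne'
  rw [invGammaPDFReal, if_pos (div_pos hs hu), div_div_cancel₀ hs.ne',
    show -((k + 1 : ℕ) : ℤ) - 1 = -((k + 2 : ℕ) : ℤ) by push_cast; ring, zpow_neg, zpow_natCast,
    Nat.add_sub_cancel, ← inv_pow, inv_div, div_pow]
  field_simp
  ring

lemma invGammaMeasure_Ici {n : ℕ} (hn : 0 < n) {s y : ℝ} (hs : 0 < s) (hy : 0 < y) :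
    invGammaMeasure n s (Ici y) = ENNReal.ofReal (lowerIncGamma n (s / y) / Gamma n) := by
  have hsy : 0 < s / y := div_pos hs hy
  have himage : (fun u => s / u) '' Ioo 0 (s / y) = Ioi y := by
    rw [image_const_div_Ioo_zero hs hsy, div_div_cancel₀ hs.ne']
  have hderiv : ∀ u ∈ Ioo 0 (s / y),
      HasDerivWithinAt (fun u => s / u) (-(s / u ^ 2)) (Ioo 0 (s / y)) u :=
    fun u hu => (hasDerivAt_const_div s hu.1.ne').hasDerivWithinAt
  have hintegrand : ∀ u ∈ Ioo 0 (s / y),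
      ENNReal.ofReal |-(s / u ^ 2)| * ENNReal.ofReal (invGammaPDFReal n s (s / u)) =
        ENNReal.ofReal (u ^ (n - 1) * exp (-u) / Gamma n) := fun u hu => by
    rw [abs_neg, abs_of_pos (by have := hu.1; positivity), ← ENNReal.ofReal_mul (by positivity),
      mul_invGammaPDFReal_const_div hn hs hu.1]
  rw [invGammaMeasure, withDensity_apply _ measurableSet_Ici,
    Measure.restrict_congr_set Ioi_ae_eq_Ici.symm, ← himage,
    lintegral_image_eq_lintegral_abs_deriv_mul measurableSet_Ioo hderiv
      (injective_const_div hs.ne').injOn,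
    setLIntegral_congr_fun measurableSet_Ioo hintegrand,
    ← ofReal_integral_eq_lintegral_ofReal, lowerIncGamma, intervalIntegral.integral_of_le hsy.le,
    integral_Ioc_eq_integral_Ioo, integral_div]
  · exact (Continuous.integrableOn_Icc (by fun_prop)).mono_set Ioo_subset_Icc_self
  · filter_upwards [ae_restrict_mem measurableSet_Ioo] with u hu
    have := hu.1
    have := Gamma_nonneg_of_nonneg (n.cast_nonneg (α := ℝ))
    positivity

lemma invGammaMeasure_ne_zero {n : ℕ} (hn : 0 < n) {s : ℝ} (hs : 0 < s) :
    invGammaMeasure n s ≠ 0 := by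
  intro h
  have hpos : 0 < lowerIncGamma n s / Gamma n :=
    div_pos (lowerIncGamma_pos n hs) (Gamma_pos_of_pos (by exact_mod_cast hn))
  exact hpos.not_ge (by simpa [h] using invGammaMeasure_Ici hn hs one_pos)

lemma setLIntegral_invGammaMeasure_Ici {n : ℕ} (hn : 0 < n) {s : ℝ} (hs : 0 < s)
    (m : ℕ) (t : ℝ) {S : Set ℝ} (hS : MeasurableSet S) (hS0 : S ⊆ Ioi 0) :
    ∫⁻ y in S, invGammaMeasure n s (Ici y) ∂invGammaMeasure m t =
      ∫⁻ y in S, ENNReal.ofReal (lowerIncGamma n (s / y) / Gamma n * invGammaPDFReal m t y) := by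
  have hmeas : Measurable fun y => invGammaMeasure n s (Ici y) :=
    Antitone.measurable fun _ _ hab => measure_mono (Ici_subset_Ici.mpr hab)
  rw [invGammaMeasure.eq_1 m t, setLIntegral_withDensity_eq_setLIntegral_mul _
    (measurable_invGammaPDFReal m t).ennreal_ofReal hmeas hS]
  refine setLIntegral_congr_fun hS fun y hy => ?_
  rw [Pi.mul_apply, invGammaMeasure_Ici hn hs (hS0 hy), mul_comm,
    ENNReal.ofReal_mul (lowerIncGamma_div_Gamma_nonneg n (div_pos hs (hS0 hy)).le)]

end InverseGamma

/-- If `X ~ iG(n, s)` and `Y ~ iG(m, t)` are independent inverse-gamma random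
variables, then for every measurable `S ⊆ (0, ∞)`,
`Pr[Y ∈ S and X ≥ Y] = ∫_S (γ(n, s/y)/Γ(n)) ⬝ (t^m/Γ(m)) y^{-m-1} e^{-t/y} dy`,
i.e. the (unnormalized) lower double inverse-gamma density of `Y` on `{X ≥ Y}` is
the lower incomplete gamma factor times the `iG(m, t)` density. -/
theorem prob_mem_and_ge_eq_integral_lowerDoubleInvGamma
    {Ω : Type*} {mΩ : MeasurableSpace Ω} (P : Measure Ω) [IsProbabilityMeasure P]
    (n m : ℕ) (hn : 0 < n) (hm : 0 < m) (s t : ℝ) (hs : 0 < s) (ht : 0 < t)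
    (X Y : Ω → ℝ)
    (hX : Measure.map X P = invGammaMeasure n s)
    (hY : Measure.map Y P = invGammaMeasure m t)
    (hXY : IndepFun X Y P)
    (S : Set ℝ) (hS : MeasurableSet S) (hS0 : S ⊆ Set.Ioi 0) :
    (P ({ω | Y ω ∈ S} ∩ {ω | X ω ≥ Y ω})).toReal =
      ∫ y in S,
        (lowerIncGamma n (s / y) / Real.Gamma n) *
          (t ^ m / Real.Gamma m * y ^ (-(m : ℤ) - 1) * Real.exp (-(t / y))) := by
  have hXm : AEMeasurable X P := .of_map_ne_zero (hX ▸ invGammaMeasure_ne_zero hn hs)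
  have hYm : AEMeasurable Y P := .of_map_ne_zero (hY ▸ invGammaMeasure_ne_zero hm ht)
  have hdensity : ∀ y ∈ S, t ^ m / Real.Gamma m * y ^ (-(m : ℤ) - 1) * Real.exp (-(t / y)) =
      invGammaPDFReal m t y := fun y hy => (if_pos (hS0 hy)).symm
  rw [setIntegral_congr_fun hS fun y hy => by rw [hdensity y hy],
    integral_eq_lintegral_of_nonneg_ae, ← setLIntegral_invGammaMeasure_Ici hn hs m t hS hS0,
    ← hX, ← hY, hXY.measure_mem_and_ge hXm hYm hS]
  · filter_upwards [ae_restrict_mem hS] with y hy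
    exact mul_nonneg (lowerIncGamma_div_Gamma_nonneg n (div_pos hs (hS0 hy)).le)
      (invGammaPDFReal_nonneg m ht.le y)
  · have hγ : Measurable fun y => lowerIncGamma n (s / y) :=
      (continuous_lowerIncGamma n).measurable.comp (by fun_prop)
    exact ((hγ.div_const _).mul (measurable_invGammaPDFReal m t)).aestronglyMeasurable
end

section
/- For all positive integers n and m, the function p ↦ I_p(n, m) / (p^n (1−p)^m) is strictly increasing on the open interval (0, 1). (Equivalently, I_p(n, m)/(p^n (1−p)^m) = ∑_{k=n}^∞ C(m+k−1, k) p^{k−n}, a power series in p with strictly positive coefficients.) -/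
open MeasureTheory

/-!
Write `n = a + 1`, `m = b + 1`, `φ u = u^a (1-u)^b`, `F p = ∫₀ᵖ φ` and `g p = p^n (1-p)^m`.
Then `F' = φ` and `g' = φ ℓ` with `ℓ u = n (1-u) - m u` strictly decreasing, so
`g p = ∫₀ᵖ φ ℓ > ℓ p · F p` for `0 < p ≤ 1`. Hence `(F / g)' = φ (g - ℓ F) / g² > 0`.
-/

namespace IncBeta

variable (a b : ℕ)

theorem hasDerivAt_pow_mul_one_sub_pow (p : ℝ) :
    HasDerivAt (fun p : ℝ => p ^ (a + 1) * (1 - p) ^ (b + 1))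
      (p ^ a * (1 - p) ^ b * ((a + 1) * (1 - p) - (b + 1) * p)) p := by
  have hl : HasDerivAt (fun p : ℝ => p ^ (a + 1)) ((a + 1) * p ^ a) p := by
    simpa using hasDerivAt_pow (a + 1) p
  have hr : HasDerivAt (fun p : ℝ => (1 - p) ^ (b + 1)) (-((b + 1) * (1 - p) ^ b)) p := by
    simpa using ((hasDerivAt_id p).const_sub 1).fun_pow (b + 1)
  exact (hl.fun_mul hr).congr_deriv (by ring)

theorem mul_integral_lt_pow_mul_one_sub_pow {p : ℝ} (hp0 : 0 < p) (hp1 : p ≤ 1) :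
    ((a + 1) * (1 - p) - (b + 1) * p) * ∫ u in (0:ℝ)..p, u ^ a * (1 - u) ^ b
      < p ^ (a + 1) * (1 - p) ^ (b + 1) := by
  set ℓ : ℝ → ℝ := fun u => (a + 1) * (1 - u) - (b + 1) * u
  have hint : ∀ f : ℝ → ℝ, Continuous f → IntervalIntegrable f volume 0 p :=
    fun f hf => hf.intervalIntegrable 0 p
  have hg : ∫ u in (0:ℝ)..p, u ^ a * (1 - u) ^ b * ℓ u = p ^ (a + 1) * (1 - p) ^ (b + 1) := by
    rw [intervalIntegral.integral_eq_sub_of_hasDerivAt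
      (fun u _ => hasDerivAt_pow_mul_one_sub_pow a b u) (hint _ (by fun_prop))]
    simp
  have hpos : 0 < ∫ u in (0:ℝ)..p, u ^ a * (1 - u) ^ b * ℓ u - u ^ a * (1 - u) ^ b * ℓ p := by
    refine intervalIntegral.intervalIntegral_pos_of_pos_on (hint _ (by fun_prop)) ?_ hp0
    rintro u ⟨hu0, hup⟩
    have hℓ : u ^ a * (1 - u) ^ b * ℓ u - u ^ a * (1 - u) ^ b * ℓ p =
        u ^ a * (1 - u) ^ b * ((a + b + 2) * (p - u)) := by ring
    have : 0 < 1 - u := by linarith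
    rw [hℓ]
    positivity
  rw [intervalIntegral.integral_sub (hint _ (by fun_prop)) (hint _ (by fun_prop)), hg,
    intervalIntegral.integral_mul_const] at hpos
  linarith

theorem strictMonoOn_integral_div_pow_mul_one_sub_pow :
    StrictMonoOn (fun p : ℝ => (∫ u in (0:ℝ)..p, u ^ a * (1 - u) ^ b) /
      (p ^ (a + 1) * (1 - p) ^ (b + 1))) (Set.Ioo 0 1) := by
  have hφ : Continuous fun u : ℝ => u ^ a * (1 - u) ^ b := by fun_prop
  have hF : ∀ p : ℝ, HasDerivAt (fun p => ∫ u in (0:ℝ)..p, u ^ a * (1 - u) ^ b)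
      (p ^ a * (1 - p) ^ b) p := fun p =>
    intervalIntegral.integral_hasDerivAt_right (hφ.intervalIntegrable _ _)
      (hφ.stronglyMeasurableAtFilter _ _) hφ.continuousAt
  have hg_ne : ∀ p ∈ Set.Ioo (0:ℝ) 1, p ^ (a + 1) * (1 - p) ^ (b + 1) ≠ 0 := by
    rintro p ⟨hp0, hp1⟩
    have : 0 < 1 - p := by linarith
    positivity
  refine strictMonoOn_of_hasDerivWithinAt_pos (convex_Ioo 0 1)
    (fun p hp => ((hF p).continuousAt.div (by fun_prop) (hg_ne p hp)).continuousWithinAt)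
    (fun p hp => ((hF p).div (hasDerivAt_pow_mul_one_sub_pow a b p)
      (hg_ne p (interior_subset hp))).hasDerivWithinAt) ?_
  rw [interior_Ioo]
  rintro p ⟨hp0, hp1⟩
  have hlt := mul_integral_lt_pow_mul_one_sub_pow a b hp0 hp1.le
  have : 0 < 1 - p := by linarith
  have hnum : 0 < p ^ a * (1 - p) ^ b * (p ^ (a + 1) * (1 - p) ^ (b + 1) -
      ((a + 1) * (1 - p) - (b + 1) * p) * ∫ u in (0:ℝ)..p, u ^ a * (1 - u) ^ b) :=
    mul_pos (by positivity) (sub_pos.2 hlt)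
  exact div_pos (by linarith) (by positivity)

end IncBeta

/-- For positive integers `n, m`, the function `p ↦ I_p(n, m) / (p^n (1-p)^m)` is
strictly increasing on `(0, 1)`. -/
theorem strictMonoOn_regIncBeta_div
    (n m : ℕ) (hn : 0 < n) (hm : 0 < m) :
    StrictMonoOn (fun p : ℝ => regIncBeta n m p / (p ^ n * (1 - p) ^ m))
      (Set.Ioo (0:ℝ) 1) := by
  obtain ⟨a, rfl⟩ := Nat.exists_eq_add_one_of_ne_zero hn.ne'
  obtain ⟨b, rfl⟩ := Nat.exists_eq_add_one_of_ne_zero hm.ne'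
  have hC : 0 < Real.Gamma ((a + 1 : ℕ) + (b + 1 : ℕ)) /
      (Real.Gamma (a + 1 : ℕ) * Real.Gamma (b + 1 : ℕ)) := by
    positivity
  intro p hp q hq hpq
  simp only [regIncBeta, Nat.add_sub_cancel, mul_div_assoc]
  exact mul_lt_mul_of_pos_left
    (IncBeta.strictMonoOn_integral_div_pow_mul_one_sub_pow a b hp hq hpq) hC
end

section
/- For all positive integers n and m and all p ∈ (0, 1), writing q = 1 − p, the following two series representations agree: ∑_{k=n}^∞ (Γ(n) Γ(k+m) / (k! Γ(n+m))) · p^{k−n} = ∑_{k=0}^{m−1} (Γ(m) Γ(n+k) / (k! Γ(n+m))) · q^{k−m}; in particular the infinite series on the left converges, and both sides equal B(n, m) · I_p(n, m) / (p^n q^m). -/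
/-!
Write `c n m k = Γ(m) Γ(n+k) / (k! Γ(n+m))` and `B = Γ(n) Γ(m) / Γ(n+m)`. Repeated integration by
parts: `H n m x = x^n ∑_{k<m} c n m k (1-x)^k` is the primitive of `u^(n-1) (1-u)^(m-1)` vanishing
at `0`, since its termwise derivative telescopes by `(k+1) c_{k+1} = (n+k) c_k`. Hence
`B I_p(n, m) = H n m p`, which is the finite sum times `p^n q^m`.

For the series, `c m n k = B binom(k+m-1, m-1)`, so `∑_k c m n k p^k = B / q^m` is a negative
binomial series. Its first `n` terms add up to `H m n q / q^m`, and `H n m p + H m n q = B` because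
the left side has derivative zero in `p`; so the tail `∑_{k ≥ n}` is `H n m p / q^m`.
-/

open MeasureTheory

open Real Finset

noncomputable def incBetaCoeff (n m k : ℕ) : ℝ :=
  Gamma m * Gamma (n + k) / (k.factorial * Gamma (n + m))

noncomputable def incBetaPrimitive (n m : ℕ) (x : ℝ) : ℝ :=
  x ^ n * ∑ k ∈ range m, incBetaCoeff n m k * (1 - x) ^ k

lemma Gamma_natCast_add_pos {n : ℕ} (hn : 0 < n) (m : ℕ) : 0 < Gamma (n + m) :=
  Gamma_pos_of_pos (by positivity)

lemma incBetaCoeff_succ {n : ℕ} (hn : 0 < n) (m k : ℕ) :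
    ((k : ℝ) + 1) * incBetaCoeff n m (k + 1) = (n + k) * incBetaCoeff n m k := by
  have hGamma : Gamma (n + (k + 1 : ℕ)) = (n + k) * Gamma (n + k) := by
    rw [Nat.cast_succ, ← add_assoc, Gamma_add_one (by positivity)]
  rw [incBetaCoeff, incBetaCoeff, hGamma, Nat.factorial_succ, Nat.cast_mul, Nat.cast_succ]
  field_simp

lemma natCast_mul_incBetaCoeff_self (n : ℕ) {m : ℕ} (hm : 0 < m) :
    (m : ℝ) * incBetaCoeff n m m = 1 := by
  obtain ⟨t, rfl⟩ := Nat.exists_eq_add_one_of_ne_zero hm.ne'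
  have hGnm := (Gamma_natCast_add_pos (Nat.succ_pos t) n).ne'
  rw [add_comm] at hGnm
  rw [incBetaCoeff, Nat.factorial_succ, Nat.cast_mul, Nat.cast_succ, ← Gamma_nat_eq_factorial]
  field_simp

lemma incBetaCoeff_eq_mul_choose {n : ℕ} (hn : 0 < n) (m k : ℕ) :
    incBetaCoeff n m k =
      Gamma n * Gamma m / Gamma (n + m) * ((k + (n - 1)).choose (n - 1) : ℕ) := by
  obtain ⟨t, rfl⟩ := Nat.exists_eq_add_one_of_ne_zero hn.ne'
  have hchoose := Nat.add_choose_mul_factorial_mul_factorial k t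
  have hGamma : Gamma ((t + 1 : ℕ) + k) = (k + t).factorial := by
    rw [← Gamma_nat_eq_factorial]; push_cast; ring_nf
  rw [incBetaCoeff, hGamma, ← hchoose, Nat.add_sub_cancel, Nat.cast_succ, Gamma_nat_eq_factorial]
  push_cast
  field_simp

lemma hasSum_incBetaCoeff_mul_pow {n : ℕ} (hn : 0 < n) (m : ℕ) {x : ℝ} (hx : ‖x‖ < 1) :
    HasSum (fun k ↦ incBetaCoeff n m k * x ^ k)
      (Gamma n * Gamma m / Gamma (n + m) / (1 - x) ^ n) := by
  have h := (hasSum_choose_mul_geometric_of_norm_lt_one (n - 1) hx).mul_left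
    (Gamma n * Gamma m / Gamma (n + m))
  rw [Nat.sub_add_cancel hn, mul_one_div] at h
  simpa only [incBetaCoeff_eq_mul_choose hn, mul_assoc] using h

lemma hasDerivAt_incBetaPrimitive {n m : ℕ} (hn : 0 < n) (hm : 0 < m) (u : ℝ) :
    HasDerivAt (incBetaPrimitive n m) (u ^ (n - 1) * (1 - u) ^ (m - 1)) u := by
  obtain ⟨a, rfl⟩ := Nat.exists_eq_add_one_of_ne_zero hn.ne'
  let c := incBetaCoeff (a + 1) m
  let T : ℕ → ℝ := fun k ↦ k * c k * u ^ a * (1 - u) ^ (k - 1)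
  have hterm : ∀ k ∈ range m,
      HasDerivAt (fun x ↦ x ^ (a + 1) * (c k * (1 - x) ^ k)) (T (k + 1) - T k) u := by
    intro k _
    have h := (hasDerivAt_pow (a + 1) u).mul
      (((hasDerivAt_pow k (1 - u)).comp u ((hasDerivAt_id u).const_sub 1)).const_mul (c k))
    refine h.congr_deriv ?_
    have hc : ((k : ℝ) + 1) * c (k + 1) = (a + 1 + k) * c k := by
      simpa using incBetaCoeff_succ hn m k
    have hpow : (k : ℝ) * (1 - u) ^ k = k * ((1 - u) ^ (k - 1) * (1 - u)) := by
      cases k <;> simp [pow_succ]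
    simp only [T, Nat.cast_add, Nat.cast_one, add_tsub_cancel_right, Function.comp_apply]
    linear_combination (-(u ^ a * (1 - u) ^ k)) * hc - (c k * u ^ a) * hpow
  have htelescope : ∑ k ∈ range m, (T (k + 1) - T k) = u ^ a * (1 - u) ^ (m - 1) := by
    rw [sum_range_sub]
    simp only [T, Nat.cast_zero, zero_mul, sub_zero, mul_assoc]
    rw [← mul_assoc, natCast_mul_incBetaCoeff_self _ hm, one_mul]
  have hprimitive : incBetaPrimitive (a + 1) m =
      fun x ↦ ∑ k ∈ range m, x ^ (a + 1) * (c k * (1 - x) ^ k) := by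
    funext x
    exact mul_sum ..
  rw [hprimitive, Nat.add_sub_cancel, ← htelescope]
  exact HasDerivAt.fun_sum hterm

lemma incBetaPrimitive_zero {n : ℕ} (hn : 0 < n) (m : ℕ) : incBetaPrimitive n m 0 = 0 := by
  simp [incBetaPrimitive, zero_pow hn.ne']

lemma incBetaPrimitive_one (n : ℕ) {m : ℕ} (hm : 0 < m) :
    incBetaPrimitive n m 1 = Gamma n * Gamma m / Gamma (n + m) := by
  rw [incBetaPrimitive, sum_eq_single_of_mem 0 (mem_range.2 hm) fun k _ hk ↦ by simp [hk]]
  simp [incBetaCoeff, mul_comm]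

lemma integral_eq_incBetaPrimitive {n m : ℕ} (hn : 0 < n) (hm : 0 < m) (x : ℝ) :
    ∫ u in (0:ℝ)..x, u ^ (n - 1) * (1 - u) ^ (m - 1) = incBetaPrimitive n m x := by
  rw [intervalIntegral.integral_eq_sub_of_hasDerivAt
      (fun u _ ↦ hasDerivAt_incBetaPrimitive hn hm u)
      (Continuous.intervalIntegrable (by fun_prop) _ _),
    incBetaPrimitive_zero hn, sub_zero]

lemma incBetaPrimitive_add_incBetaPrimitive_one_sub {n m : ℕ} (hn : 0 < n) (hm : 0 < m)
    (x : ℝ) :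
    incBetaPrimitive n m x + incBetaPrimitive m n (1 - x) =
      Gamma n * Gamma m / Gamma (n + m) := by
  have hderiv : ∀ u, HasDerivAt (fun x ↦ incBetaPrimitive n m x + incBetaPrimitive m n (1 - x))
      0 u := by
    intro u
    have h := (hasDerivAt_incBetaPrimitive hn hm u).add
      ((hasDerivAt_incBetaPrimitive hm hn (1 - u)).comp u ((hasDerivAt_id' u).const_sub 1))
    rw [sub_sub_cancel] at h
    exact h.congr_deriv (by ring)
  have hconst := is_const_of_deriv_eq_zero (fun u ↦ (hderiv u).differentiableAt)
    (fun u ↦ (hderiv u).deriv) x 0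
  rw [hconst, sub_zero, incBetaPrimitive_zero hn, incBetaPrimitive_one m hn, zero_add, add_comm,
    mul_comm]

lemma sum_incBetaCoeff_mul_zpow (n m : ℕ) {p : ℝ} (hp : p ≠ 0) (hq : 1 - p ≠ 0) :
    ∑ k ∈ range m, incBetaCoeff n m k * (1 - p) ^ ((k : ℤ) - m) =
      incBetaPrimitive n m p / (p ^ n * (1 - p) ^ m) := by
  rw [incBetaPrimitive, mul_div_mul_left _ _ (pow_ne_zero n hp), sum_div]
  refine sum_congr rfl fun k _ ↦ ?_
  rw [zpow_sub₀ hq, zpow_natCast, zpow_natCast, mul_div_assoc]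

lemma hasSum_incBetaCoeff_mul_pow_tail {n m : ℕ} (hn : 0 < n) (hm : 0 < m) {p : ℝ}
    (hp : p ∈ Set.Ioo (0 : ℝ) 1) :
    HasSum (fun j ↦ incBetaCoeff m n (n + j) * p ^ j)
      (incBetaPrimitive n m p / (p ^ n * (1 - p) ^ m)) := by
  obtain ⟨hp0, hp1⟩ := hp
  have hq : 1 - p ≠ 0 := (sub_pos.2 hp1).ne'
  have hfull := hasSum_incBetaCoeff_mul_pow hm n (x := p)
    (by rwa [norm_of_nonneg hp0.le])
  have hhead : ∑ k ∈ range n, incBetaCoeff m n k * p ^ k =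
      incBetaPrimitive m n (1 - p) / (1 - p) ^ m := by
    rw [incBetaPrimitive, sub_sub_cancel, mul_div_cancel_left₀ _ (pow_ne_zero m hq)]
  have htail := (hasSum_nat_add_iff' n).2 hfull
  rw [hhead, add_comm (m : ℝ), mul_comm (Gamma m), div_sub_div_same,
    ← incBetaPrimitive_add_incBetaPrimitive_one_sub hn hm p, add_sub_cancel_right] at htail
  rw [mul_comm, ← div_div]
  refine (htail.div_const (p ^ n)).congr_fun fun j ↦ ?_
  rw [pow_add, add_comm j]
  field_simp

lemma beta_mul_regIncBeta_eq_integral {n m : ℕ} (hn : 0 < n) (hm : 0 < m) (p : ℝ) :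
    Gamma n * Gamma m / Gamma (n + m) * regIncBeta n m p =
      ∫ u in (0:ℝ)..p, u ^ (n - 1) * (1 - u) ^ (m - 1) := by
  have hGn := (Gamma_pos_of_pos (Nat.cast_pos.2 hn)).ne'
  have hGm := (Gamma_pos_of_pos (Nat.cast_pos.2 hm)).ne'
  have hGnm := (Gamma_natCast_add_pos hn m).ne'
  rw [regIncBeta, ← mul_assoc]
  field_simp

/-- For positive integers `n, m` and `p ∈ (0,1)`, with `q = 1 - p`, the infinite series
`∑_{k=n}^∞ (Γ(n)Γ(k+m)/(k! Γ(n+m))) p^{k-n}` (written with `k = n + j`) converges to the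
finite sum `∑_{k=0}^{m-1} (Γ(m)Γ(n+k)/(k! Γ(n+m))) q^{k-m}`, and both sides equal
`B(n, m) ⬝ I_p(n, m) / (p^n q^m)`. -/
theorem negBinomial_series_eq_finite_sum
    (n m : ℕ) (hn : 0 < n) (hm : 0 < m) (p : ℝ) (hp : p ∈ Set.Ioo (0:ℝ) 1) :
    HasSum
      (fun j : ℕ =>
        Real.Gamma n * Real.Gamma ((n + j : ℕ) + m) /
          ((n + j).factorial * Real.Gamma (n + m)) * p ^ j)
      (∑ k ∈ Finset.range m,
        Real.Gamma m * Real.Gamma (n + k) / (k.factorial * Real.Gamma (n + m)) *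
          (1 - p) ^ ((k : ℤ) - m)) ∧
    (∑ k ∈ Finset.range m,
        Real.Gamma m * Real.Gamma (n + k) / (k.factorial * Real.Gamma (n + m)) *
          (1 - p) ^ ((k : ℤ) - m)) =
      (Real.Gamma n * Real.Gamma m / Real.Gamma (n + m)) * regIncBeta n m p /
        (p ^ n * (1 - p) ^ m) := by
  have hfinite := sum_incBetaCoeff_mul_zpow n m hp.1.ne' (sub_pos.2 hp.2).ne'
  have hseries := hasSum_incBetaCoeff_mul_pow_tail hn hm hp
  simp only [incBetaCoeff, add_comm (m : ℝ)] at hfinite hseries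
  rw [hfinite, beta_mul_regIncBeta_eq_integral hn hm, integral_eq_incBetaPrimitive hn hm]
  exact ⟨hseries, rfl⟩
end

section
/- Let Y ∈ ℂ^{D×M}, let V ∈ ℂ^{D×K} satisfy V*V = D·I_K, and let σ > 0. Define A₀ = V*Y/D and H₀ = Y − V A₀. Then, with respect to Lebesgue measure on ℂ^{K×M} ≅ ℝ^{2KM}: (i) ∫_{ℂ^{K×M}} exp(−‖Y − V A‖²/σ²) dA = (π σ²/D)^{KM} · exp(−‖H₀‖²/σ²); and (ii) for σ_a > 0, setting σ₀² = σ²/D and τ = σ₀²/(σ_a² + σ₀²), ∫_{ℂ^{K×M}} exp(−‖Y − V A‖²/σ² − ‖A‖²/σ_a²) dA = (π τ σ_a²)^{KM} · exp(−(‖H₀‖² + τ‖V A₀‖²)/σ²). -/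
/-!
Because `VᴴV = D·I`, `A₀ = VᴴY/D` is the least-squares coefficient: the residual `H₀` is
orthogonal to the range of `V`, so Pythagoras gives `‖Y - VA‖² = ‖H₀‖² + D‖A - A₀‖²`.
After completing the square in `A` for the second integral, both integrands are a constant
times a shifted isotropic Gaussian on `ℂ^{K×M}`, which factors over the `KM` entries, each
contributing `π / b`.
-/

open Matrix MeasureTheory

/-- The squared Frobenius (Hilbert–Schmidt) norm `‖M‖² = Tr(Mᴴ M)` of a complex matrix. -/
noncomputable def frobSq {d m : ℕ} (M : Matrix (Fin d) (Fin m) ℂ) : ℝ :=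
  (Matrix.trace (Mᴴ * M)).re

section Frobenius

variable {d k m : ℕ}

lemma frobSq_eq_sum (M : Matrix (Fin d) (Fin m) ℂ) : frobSq M = ∑ i, ∑ j, ‖M i j‖ ^ 2 := by
  rw [Finset.sum_comm, frobSq, trace, Complex.re_sum]
  refine Finset.sum_congr rfl fun j _ => ?_
  rw [diag_apply, mul_apply, Complex.re_sum]
  refine Finset.sum_congr rfl fun i _ => ?_
  rw [conjTranspose_apply, Complex.star_def, ← Complex.normSq_eq_conj_mul_self, Complex.ofReal_re,
    Complex.normSq_eq_norm_sq]

lemma frobSq_sub_of_conjTranspose_mul_eq_zero {X Y : Matrix (Fin d) (Fin m) ℂ}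
    (h : Xᴴ * Y = 0) : frobSq (X - Y) = frobSq X + frobSq Y := by
  have h' : Yᴴ * X = 0 := by simpa using congrArg conjTranspose h
  rw [frobSq, conjTranspose_sub, Matrix.sub_mul, Matrix.mul_sub, Matrix.mul_sub, h, h']
  simp [frobSq]

lemma frobSq_mul_of_conjTranspose_mul_self {V : Matrix (Fin d) (Fin k) ℂ} {r : ℝ}
    (hV : Vᴴ * V = (r : ℂ) • 1) (B : Matrix (Fin k) (Fin m) ℂ) :
    frobSq (V * B) = r * frobSq B := by
  rw [frobSq, conjTranspose_mul, Matrix.mul_assoc, ← Matrix.mul_assoc Vᴴ, hV, smul_mul,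
    Matrix.one_mul, Matrix.mul_smul, trace_smul, smul_eq_mul, Complex.re_ofReal_mul, frobSq]

lemma conjTranspose_mul_sub_mul_eq_zero {V : Matrix (Fin d) (Fin k) ℂ} {r : ℝ}
    (hV : Vᴴ * V = (r : ℂ) • 1) {Y : Matrix (Fin d) (Fin m) ℂ} {A₀ : Matrix (Fin k) (Fin m) ℂ}
    (hA₀ : (r : ℂ) • A₀ = Vᴴ * Y) : Vᴴ * (Y - V * A₀) = 0 := by
  rw [Matrix.mul_sub, ← Matrix.mul_assoc, hV, smul_mul, Matrix.one_mul, hA₀, sub_self]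

lemma frobSq_sub_mul_eq_add {V : Matrix (Fin d) (Fin k) ℂ} {r : ℝ}
    (hV : Vᴴ * V = (r : ℂ) • 1) {Y : Matrix (Fin d) (Fin m) ℂ} {A₀ : Matrix (Fin k) (Fin m) ℂ}
    (hA₀ : (r : ℂ) • A₀ = Vᴴ * Y) (A : Matrix (Fin k) (Fin m) ℂ) :
    frobSq (Y - V * A) = frobSq (Y - V * A₀) + r * frobSq (A - A₀) := by
  have horth : (Y - V * A₀)ᴴ * (V * (A - A₀)) = 0 := by
    rw [← Matrix.mul_assoc, ← conjTranspose_conjTranspose V, ← conjTranspose_mul,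
      conjTranspose_conjTranspose, conjTranspose_mul_sub_mul_eq_zero hV hA₀,
      conjTranspose_zero, Matrix.zero_mul]
  rw [← frobSq_mul_of_conjTranspose_mul_self hV, ← frobSq_sub_of_conjTranspose_mul_eq_zero horth,
    Matrix.mul_sub, sub_sub_sub_cancel_right]

lemma norm_sq_add_norm_sq_eq_complete_square {E : Type*} [NormedAddCommGroup E]
    [InnerProductSpace ℝ E] {p q : ℝ} (hpq : p + q ≠ 0) (x y : E) :
    p * ‖x - y‖ ^ 2 + q * ‖x‖ ^ 2
      = (p + q) * ‖x - (p / (p + q)) • y‖ ^ 2 + p * q / (p + q) * ‖y‖ ^ 2 := by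
  rw [norm_sub_sq_real, norm_sub_sq_real, norm_smul, inner_smul_right, mul_pow, Real.norm_eq_abs,
    sq_abs]
  field_simp
  ring

lemma frobSq_add_frobSq_eq_complete_square {p q : ℝ} (hpq : p + q ≠ 0)
    (A B : Matrix (Fin d) (Fin m) ℂ) :
    p * frobSq (A - B) + q * frobSq A
      = (p + q) * frobSq (A - (p / (p + q)) • B) + p * q / (p + q) * frobSq B := by
  simp only [frobSq_eq_sum, Finset.mul_sum, ← Finset.sum_add_distrib, Matrix.sub_apply,
    Matrix.smul_apply]
  exact Finset.sum_congr rfl fun i _ => Finset.sum_congr rfl fun j _ =>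
    norm_sq_add_norm_sq_eq_complete_square hpq (A i j) (B i j)

end Frobenius

lemma integral_exp_neg_sum {ι α : Type*} [Fintype ι] [MeasureSpace α]
    [SigmaFinite (volume : Measure α)] (f : ι → α → ℝ) :
    ∫ x : ι → α, Real.exp (-∑ i, f i (x i)) = ∏ i, ∫ y, Real.exp (-f i y) := by
  have hprod (x : ι → α) : Real.exp (-∑ i, f i (x i)) = ∏ i, Real.exp (-f i (x i)) := by
    rw [← Real.exp_sum, Finset.sum_neg_distrib]
  simp_rw [hprod]
  exact integral_fintype_prod_volume_eq_prod fun i y => Real.exp (-f i y)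

lemma integral_exp_neg_mul_norm_sub_sq {b : ℝ} (hb : 0 < b) (c : ℂ) :
    ∫ z : ℂ, Real.exp (-(b * ‖z - c‖ ^ 2)) = Real.pi / b := by
  rw [integral_sub_right_eq_self (fun z : ℂ => Real.exp (-(b * ‖z‖ ^ 2))) c]
  simp_rw [← neg_mul]
  rw [GaussianFourier.integral_rexp_neg_mul_sq_norm hb, Complex.finrank_real_complex]
  norm_num

lemma integral_exp_neg_mul_frobSq_sub {k m : ℕ} {b : ℝ} (hb : 0 < b)
    (C : Matrix (Fin k) (Fin m) ℂ) :
    ∫ A : Fin k → Fin m → ℂ, Real.exp (-(b * frobSq (Matrix.of A - C))) =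
      (Real.pi / b) ^ (k * m) := by
  simp only [frobSq_eq_sum, Finset.mul_sum, Matrix.sub_apply, of_apply]
  rw [integral_exp_neg_sum (fun (i : Fin k) (r : Fin m → ℂ) => ∑ j, b * ‖r j - C i j‖ ^ 2)]
  have hrow (i : Fin k) :
      ∫ r : Fin m → ℂ, Real.exp (-∑ j, b * ‖r j - C i j‖ ^ 2) = (Real.pi / b) ^ m := by
    rw [integral_exp_neg_sum (fun j z => b * ‖z - C i j‖ ^ 2)]
    simp only [integral_exp_neg_mul_norm_sub_sq hb, Finset.prod_const, Finset.card_univ,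
      Fintype.card_fin]
  simp only [hrow, Finset.prod_const, Finset.card_univ, Fintype.card_fin, ← pow_mul, mul_comm]

/-- Gaussian matrix integrals over `ℂ^{K×M}` (with Lebesgue measure, identifying
`ℂ^{K×M} ≅ ℝ^{2KM}`): with `VᴴV = D·I`, `A₀ = VᴴY/D` and `H₀ = Y - V A₀`,
(i) `∫ exp(-‖Y - V A‖²/σ²) dA = (πσ²/D)^{KM} exp(-‖H₀‖²/σ²)`, and
(ii) with `σ₀² = σ²/D` and `τ = σ₀²/(σ_a² + σ₀²)`,
`∫ exp(-‖Y - V A‖²/σ² - ‖A‖²/σ_a²) dA = (πτσ_a²)^{KM} exp(-(‖H₀‖² + τ‖V A₀‖²)/σ²)`. -/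
theorem integral_gaussian_matrix
    (D M K : ℕ) (hD : 0 < D)
    (Y : Matrix (Fin D) (Fin M) ℂ) (V : Matrix (Fin D) (Fin K) ℂ)
    (hV : Vᴴ * V = ((D : ℕ) : ℂ) • (1 : Matrix (Fin K) (Fin K) ℂ))
    (σ : ℝ) (hσ : 0 < σ)
    (A₀ H₀ : Matrix _ _ ℂ)
    (hA₀ : A₀ = ((1 : ℂ) / (D : ℂ)) • (Vᴴ * Y)) (hH₀ : H₀ = Y - V * A₀) :
    (∫ A : Fin K → Fin M → ℂ,
        Real.exp (-(frobSq (Y - V * Matrix.of A)) / σ ^ 2) =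
      (Real.pi * σ ^ 2 / D) ^ (K * M) * Real.exp (-(frobSq H₀) / σ ^ 2)) ∧
    ∀ σa : ℝ, 0 < σa →
      ∀ σ₀sq τ : ℝ, σ₀sq = σ ^ 2 / D → τ = σ₀sq / (σa ^ 2 + σ₀sq) →
        ∫ A : Fin K → Fin M → ℂ,
            Real.exp (-(frobSq (Y - V * Matrix.of A)) / σ ^ 2
              - frobSq (Matrix.of A) / σa ^ 2) =
          (Real.pi * τ * σa ^ 2) ^ (K * M) *
            Real.exp (-(frobSq H₀ + τ * frobSq (V * A₀)) / σ ^ 2) := by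
  have hD' : (D : ℝ) ≠ 0 := by positivity
  have hVr : Vᴴ * V = ((D : ℝ) : ℂ) • 1 := by simpa using hV
  have hA₀r : ((D : ℝ) : ℂ) • A₀ = Vᴴ * Y := by
    rw [hA₀, smul_smul, Complex.ofReal_natCast, mul_one_div_cancel (by exact_mod_cast hD'),
      one_smul]
  have hsplit (A : Matrix (Fin K) (Fin M) ℂ) :
      frobSq (Y - V * A) = frobSq H₀ + D * frobSq (A - A₀) :=
    hH₀ ▸ frobSq_sub_mul_eq_add hVr hA₀r A
  refine ⟨?_, fun σa hσa σ₀sq τ hσ₀sq hτ => ?_⟩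
  · calc _ = ∫ A : Fin K → Fin M → ℂ, Real.exp (-frobSq H₀ / σ ^ 2) *
          Real.exp (-(D / σ ^ 2 * frobSq (Matrix.of A - A₀))) := by
          congr 1; funext A
          rw [hsplit, ← Real.exp_add]
          ring_nf
      _ = _ := by
          rw [integral_const_mul, integral_exp_neg_mul_frobSq_sub (by positivity)]
          field_simp
  · have hpq : D / σ ^ 2 + 1 / σa ^ 2 ≠ 0 := by positivity
    have hcoef : D / σ ^ 2 * (1 / σa ^ 2) / (D / σ ^ 2 + 1 / σa ^ 2) = τ * D / σ ^ 2 := by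
      rw [hτ, hσ₀sq]; field_simp
    have hvol : Real.pi / (D / σ ^ 2 + 1 / σa ^ 2) = Real.pi * τ * σa ^ 2 := by
      rw [hτ, hσ₀sq]; field_simp
    calc _ = ∫ A : Fin K → Fin M → ℂ,
          Real.exp (-(frobSq H₀ + τ * frobSq (V * A₀)) / σ ^ 2) *
          Real.exp (-((D / σ ^ 2 + 1 / σa ^ 2) * frobSq (Matrix.of A -
            ((D / σ ^ 2) / (D / σ ^ 2 + 1 / σa ^ 2)) • A₀))) := by
          congr 1; funext A
          rw [hsplit, ← Real.exp_add, frobSq_mul_of_conjTranspose_mul_self hVr]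
          congr 1
          linear_combination -frobSq_add_frobSq_eq_complete_square hpq (Matrix.of A) A₀ -
            frobSq A₀ * hcoef
      _ = _ := by rw [integral_const_mul, integral_exp_neg_mul_frobSq_sub (by positivity), hvol,
            mul_comm]
end
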